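/- Let f ∈ 𝒰(λ), 0 < λ ≤ 1, with f(z) = z + a₂z² + ... . Then |a₄ − a₂³| ≤ 2λ(1 + λ), with equality for f_λ(z) = z/((1−z)(1−λz)). -/

import Mathlib

/-!
Write `z / f z = 1 + z G(z)`. Then `(z / f)² f' - 1 = -z² G'`, so `|G'| ≤ λ` on the disk by
Schwarz's lemma, and comparing Taylor coefficients in `f · (1 + z G) = z` gives
`a₄ - a₂³ = 2 G(0) G'(0) - G''(0) / 2`. Moreover `|G(0)| ≤ 1 + λ`, since otherwise `1 + z G(z)`
would vanish in the disk, and Schwarz–Pick for `G'` gives `λ |G''(0)| ≤ λ² - |G'(0)|²`;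
maximising over `|G'(0)| ≤ λ` yields `2λ(1 + λ)`. For `f_λ` one has `G(z) = -(1 + λ) + λ z`.
-/

open Complex Metric Filter Set
open scoped Topology NNReal ComplexConjugate

section TaylorCoeff

variable {𝕜 : Type*} [NontriviallyNormedField 𝕜]

noncomputable def taylorCoeff (f : 𝕜 → 𝕜) (n : ℕ) (x : 𝕜) : 𝕜 :=
  iteratedDeriv n f x / n.factorial

@[simp]
theorem taylorCoeff_zero (f : 𝕜 → 𝕜) (x : 𝕜) : taylorCoeff f 0 x = f x := by
  simp [taylorCoeff]

theorem taylorCoeff_one (f : 𝕜 → 𝕜) (x : 𝕜) : taylorCoeff f 1 x = deriv f x := by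
  simp [taylorCoeff]

theorem taylorCoeff_two (f : 𝕜 → 𝕜) (x : 𝕜) :
    taylorCoeff f 2 x = deriv (deriv f) x / 2 := by
  simp [taylorCoeff, iteratedDeriv_succ]

theorem taylorCoeff_id_zero (n : ℕ) :
    taylorCoeff (fun z : 𝕜 => z) n 0 = if n = 1 then 1 else 0 := by
  rw [taylorCoeff, iteratedDeriv_fun_id_zero]
  split_ifs with h <;> simp [h]

theorem Filter.EventuallyEq.taylorCoeff_eq {f g : 𝕜 → 𝕜} {x : 𝕜} (h : f =ᶠ[𝓝 x] g) (n : ℕ) :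
    taylorCoeff f n x = taylorCoeff g n x := by
  rw [taylorCoeff, taylorCoeff, h.iteratedDeriv_eq]

variable [CharZero 𝕜]

theorem taylorCoeff_mul {f g : 𝕜 → 𝕜} {x : 𝕜} {n : ℕ} (hf : ContDiffAt 𝕜 n f x)
    (hg : ContDiffAt 𝕜 n g x) :
    taylorCoeff (f * g) n x =
      ∑ i ∈ Finset.range (n + 1), taylorCoeff f i x * taylorCoeff g (n - i) x := by
  rw [taylorCoeff, iteratedDeriv_mul hf hg, Finset.sum_div]
  refine Finset.sum_congr rfl fun i hi => ?_
  have hi : i ≤ n := Nat.lt_succ_iff.mp (Finset.mem_range.mp hi)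
  have hchoose : (n.choose i : 𝕜) ≠ 0 := Nat.cast_ne_zero.mpr (Nat.choose_pos hi).ne'
  rw [taylorCoeff, taylorCoeff, ← Nat.choose_mul_factorial_mul_factorial hi]
  push_cast
  field_simp

theorem taylorCoeff_succ_id_mul {G : 𝕜 → 𝕜} {n : ℕ} (hG : ContDiffAt 𝕜 (n + 1) G 0) :
    taylorCoeff (fun z => z * G z) (n + 1) 0 = taylorCoeff G n 0 := by
  rw [show (fun z => z * G z) = (fun z => z) * G from rfl,
    taylorCoeff_mul (f := fun z => z) contDiffAt_id (by exact_mod_cast hG), Finset.sum_eq_single 1]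
  · simp [taylorCoeff_id_zero]
  · intro i _ hi
    simp [taylorCoeff_id_zero, hi]
  · simp

theorem taylorCoeff_succ_one_add_id_mul {G : 𝕜 → 𝕜} {n : ℕ} (hG : ContDiffAt 𝕜 (n + 1) G 0) :
    taylorCoeff (fun z => 1 + z * G z) (n + 1) 0 = taylorCoeff G n 0 := by
  rw [← taylorCoeff_succ_id_mul hG, taylorCoeff, taylorCoeff,
    iteratedDeriv_const_add n.succ_pos]

theorem taylorCoeff_four_sub_cube_of_mul_eventuallyEq_id {f g : 𝕜 → 𝕜} (hf : ContDiffAt 𝕜 4 f 0)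
    (hg : ContDiffAt 𝕜 4 g 0) (hfg : f * g =ᶠ[𝓝 0] fun z => z) (hg0 : g 0 = 1) :
    taylorCoeff f 4 0 - taylorCoeff f 2 0 ^ 3 =
      2 * taylorCoeff g 1 0 * taylorCoeff g 2 0 - taylorCoeff g 3 0 := by
  have key : ∀ n ≤ 4, ∑ i ∈ Finset.range (n + 1), taylorCoeff f i 0 * taylorCoeff g (n - i) 0 =
      if n = 1 then 1 else 0 := fun n hn => by
    have hn' : (n : WithTop ℕ∞) ≤ 4 := by exact_mod_cast hn
    rw [← taylorCoeff_mul (hf.of_le hn') (hg.of_le hn'), hfg.taylorCoeff_eq, taylorCoeff_id_zero]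
  have h0 := key 0 (by norm_num)
  have h1 := key 1 (by norm_num)
  have h2 := key 2 (by norm_num)
  have h3 := key 3 (by norm_num)
  have h4 := key 4 (by norm_num)
  simp only [Finset.sum_range_succ, Finset.sum_range_zero] at h0 h1 h2 h3 h4
  norm_num [hg0] at h0
  norm_num [hg0, h0] at h1 h2 h3 h4
  set c₁ := taylorCoeff g 1 0
  set c₂ := taylorCoeff g 2 0
  set c₃ := taylorCoeff g 3 0
  have ha₂ : taylorCoeff f 2 0 = -c₁ := by linear_combination h2 - c₁ * h1
  have ha₃ : taylorCoeff f 3 0 = c₁ ^ 2 - c₂ := by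
    linear_combination h3 - c₂ * h1 - c₁ * ha₂
  rw [ha₂]
  linear_combination h4 - c₃ * h1 - c₂ * ha₂ - c₁ * ha₃

theorem taylorCoeff_four_sub_cube_div_one_add_id_mul {G : 𝕜 → 𝕜} (hG : ContDiffAt 𝕜 4 G 0) :
    taylorCoeff (fun z => z / (1 + z * G z)) 4 0 -
        taylorCoeff (fun z => z / (1 + z * G z)) 2 0 ^ 3 =
      2 * G 0 * deriv G 0 - deriv (deriv G) 0 / 2 := by
  set g : 𝕜 → 𝕜 := fun z => 1 + z * G z
  have hg : ContDiffAt 𝕜 4 g 0 := contDiffAt_const.add (contDiffAt_id.mul hG)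
  have hg0 : g 0 = 1 := by simp [g]
  have hfg : (fun z => z / g z) * g =ᶠ[𝓝 0] fun z => z := by
    filter_upwards [hg.continuousAt.eventually_ne (hg0 ▸ one_ne_zero)] with z hz
    exact div_mul_cancel₀ z hz
  have hc (n : ℕ) (hn : n ≤ 3) : taylorCoeff g (n + 1) 0 = taylorCoeff G n 0 :=
    taylorCoeff_succ_one_add_id_mul (hG.of_le (by exact_mod_cast Nat.succ_le_succ hn))
  have := taylorCoeff_four_sub_cube_of_mul_eventuallyEq_id (f := fun z => z / g z)
    (contDiffAt_id.div hg (by simp [hg0])) hg hfg hg0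
  rwa [hc 0 (by norm_num), hc 1 (by norm_num), hc 2 (by norm_num), taylorCoeff_zero,
    taylorCoeff_one, taylorCoeff_two G] at this

theorem taylorCoeff_four_sub_cube_div_one_sub_mul_one_sub (c : 𝕜) :
    taylorCoeff (fun z => z / ((1 - z) * (1 - c * z))) 4 0 -
        taylorCoeff (fun z => z / ((1 - z) * (1 - c * z))) 2 0 ^ 3 = -2 * c * (1 + c) := by
  have hrepr : (fun z : 𝕜 => z / ((1 - z) * (1 - c * z))) =
      fun z => z / (1 + z * (-(1 + c) + c * z)) := by
    funext z; ring_nf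
  have hderiv : deriv (fun z : 𝕜 => -(1 + c) + c * z) = fun _ => c := by
    funext z; simp
  rw [hrepr, taylorCoeff_four_sub_cube_div_one_add_id_mul (by fun_prop), hderiv]
  simp
  ring

end TaylorCoeff

theorem exists_eq_div_one_add_mul {f : ℂ → ℂ} {s : Set ℂ} (hs : s ∈ 𝓝 0)
    (hf : DifferentiableOn ℂ f s) (hf0 : f 0 = 0) (hf1 : deriv f 0 = 1)
    (hne : ∀ z ∈ s, z ≠ 0 → f z ≠ 0) :
    ∃ G : ℂ → ℂ, DifferentiableOn ℂ G s ∧ (∀ z ∈ s, 1 + z * G z ≠ 0) ∧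
      f = fun z => z / (1 + z * G z) := by
  set u := dslope f 0
  have hfu : ∀ z, f z = z * u z := fun z => by simpa [hf0] using (sub_smul_dslope f 0 z).symm
  have hu0 : u 0 = 1 := by simp [u, hf1]
  have hune : ∀ z ∈ s, u z ≠ 0 := by
    intro z hz huz
    rcases eq_or_ne z 0 with rfl | hz0
    · simp [hu0] at huz
    · exact hne z hz hz0 (by rw [hfu, huz, mul_zero])
  set F := fun z => (u z)⁻¹
  have hF0 : F 0 = 1 := by simp [F, hu0]
  have hFG : ∀ z, 1 + z * dslope F 0 z = F z := fun z => by
    simpa [hF0, eq_sub_iff_add_eq'] using sub_smul_dslope F 0 z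
  refine ⟨dslope F 0, (Complex.differentiableOn_dslope hs).mpr
    (((Complex.differentiableOn_dslope hs).mpr hf).inv hune), fun z hz => ?_, ?_⟩
  · rw [hFG]
    exact inv_ne_zero (hune z hz)
  · funext z
    rw [hFG, hfu, div_inv_eq_mul]

theorem sq_div_mul_deriv_div_one_add_mul_sub_one {𝕜 : Type*} [NontriviallyNormedField 𝕜]
    {G : 𝕜 → 𝕜} {z : 𝕜} (hG : DifferentiableAt 𝕜 G z) (hz : z ≠ 0) (hGz : 1 + z * G z ≠ 0) :
    (z / (z / (1 + z * G z))) ^ 2 * deriv (fun w => w / (1 + w * G w)) z - 1 =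
      -(z ^ 2 * deriv G z) := by
  have hF : HasDerivAt (fun w => 1 + w * G w) (1 * G z + z * deriv G z) z :=
    ((hasDerivAt_id' z).fun_mul hG.hasDerivAt).const_add 1
  rw [((hasDerivAt_id' z).fun_div hF hGz).deriv]
  field_simp
  ring

theorem dslope_zero_id_mul {𝕜 : Type*} [NontriviallyNormedField 𝕜] {h : 𝕜 → 𝕜}
    (hh : DifferentiableAt 𝕜 h 0) : dslope (fun z => z * h z) 0 = h := by
  funext z
  rcases eq_or_ne z 0 with rfl | hz
  · simpa using ((hasDerivAt_id' 0).fun_mul hh.hasDerivAt).deriv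
  · rw [dslope_of_ne _ hz, slope_def_field]
    field_simp
    simp [mul_comm]

/-- `h` is obtained from `z ↦ z ^ 2 * h z` by taking `dslope · 0` twice, and each step is
Schwarz's lemma. -/
theorem norm_le_of_forall_norm_sq_mul_le {h : ℂ → ℂ} {L : ℝ}
    (hh : DifferentiableOn ℂ h (ball 0 1)) (hL : ∀ z ∈ ball (0 : ℂ) 1, ‖z ^ 2 * h z‖ ≤ L) :
    ∀ z ∈ ball (0 : ℂ) 1, ‖h z‖ ≤ L := by
  have hdiff : ∀ z ∈ ball (0 : ℂ) 1, DifferentiableAt ℂ h z :=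
    fun z hz => hh.differentiableAt (isOpen_ball.mem_nhds hz)
  have h1 : DifferentiableOn ℂ (fun z => z * h z) (ball 0 1) := differentiableOn_id.mul hh
  have h2 : DifferentiableOn ℂ (fun z => z * (z * h z)) (ball 0 1) := differentiableOn_id.mul h1
  have hmaps : MapsTo (fun z => z * h z) (ball 0 1) (closedBall (0 * h 0) L) := by
    intro z hz
    rw [← dslope_zero_id_mul (h1.differentiableAt (ball_mem_nhds 0 one_pos))]
    simpa using Complex.norm_dslope_le_div_of_mapsTo_ball h2
      (fun w hw => by simpa [sq, mul_assoc] using hL w hw) hz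
  intro z hz
  rw [← dslope_zero_id_mul (hdiff 0 (mem_ball_self one_pos))]
  simpa using Complex.norm_dslope_le_div_of_mapsTo_ball h1 hmaps hz

theorem norm_mul_sub_le_norm_sq_sub_conj_mul {L : ℝ} {c w : ℂ} (hw : ‖w‖ ≤ L) (hc : ‖c‖ ≤ L) :
    ‖(L : ℂ) * (w - c)‖ ≤ ‖(L : ℂ) ^ 2 - conj c * w‖ := by
  have hL : 0 ≤ L := (norm_nonneg w).trans hw
  have key : ‖(L : ℂ) ^ 2 - conj c * w‖ ^ 2 - ‖(L : ℂ) * (w - c)‖ ^ 2 =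
      (L ^ 2 - ‖w‖ ^ 2) * (L ^ 2 - ‖c‖ ^ 2) := by
    apply Complex.ofReal_injective
    push_cast
    simp only [← Complex.mul_conj', map_sub, map_mul, map_pow, Complex.conj_ofReal,
      Complex.conj_conj]
    ring
  have : 0 ≤ (L ^ 2 - ‖w‖ ^ 2) * (L ^ 2 - ‖c‖ ^ 2) :=
    mul_nonneg (by nlinarith [norm_nonneg w]) (by nlinarith [norm_nonneg c])
  exact (pow_le_pow_iff_left₀ (norm_nonneg _) (norm_nonneg _) two_ne_zero).mp (by linarith)

theorem norm_deriv_mul_le_sq_sub_norm_sq_of_norm_lt {h : ℂ → ℂ} {L : ℝ} (hL : 0 < L)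
    (hh : DifferentiableOn ℂ h (ball 0 1)) (hbound : ∀ z ∈ ball (0 : ℂ) 1, ‖h z‖ ≤ L)
    (hc : ‖h 0‖ < L) : ‖deriv h 0‖ * L ≤ L ^ 2 - ‖h 0‖ ^ 2 := by
  have h0 : (0 : ℂ) ∈ ball (0 : ℂ) 1 := mem_ball_self one_pos
  set c := h 0
  -- Schwarz's lemma for the Möbius transform `χ` of `h` that moves `c` to `0`
  set D : ℂ → ℂ := fun z => (L : ℂ) ^ 2 - conj c * h z
  have hD : ∀ z ∈ ball (0 : ℂ) 1, D z ≠ 0 := fun z hz hDz => by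
    have : ‖conj c * h z‖ < L ^ 2 := by
      rw [norm_mul, Complex.norm_conj, sq]
      exact mul_lt_mul_of_lt_of_le_of_nonneg_of_pos hc (hbound z hz) (norm_nonneg _) hL
    rw [← sub_eq_zero.mp hDz] at this
    simp [abs_of_pos hL] at this
  set χ : ℂ → ℂ := fun z => (L : ℂ) * (h z - c) / D z
  have hχ : DifferentiableOn ℂ χ (ball 0 1) :=
    ((differentiableOn_const _).mul (hh.sub_const c)).div
      ((differentiableOn_const _).sub ((differentiableOn_const _).mul hh)) hD
  have hχ0 : χ 0 = 0 := by simp [χ, c]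
  have hmaps : MapsTo χ (ball 0 1) (closedBall (χ 0) 1) := fun z hz => by
    rw [hχ0, mem_closedBall, dist_zero_right]
    simpa [χ, norm_div, div_le_one (norm_pos_iff.mpr (hD z hz))] using
      norm_mul_sub_le_norm_sq_sub_conj_mul (hbound z hz) hc.le
  have hD0 : D 0 = ((L ^ 2 - ‖c‖ ^ 2 : ℝ) : ℂ) := by
    change (L : ℂ) ^ 2 - conj c * c = _
    push_cast
    rw [Complex.conj_mul']
  have hderiv : deriv χ 0 = L * deriv h 0 / D 0 := by
    have hh' := (hh.differentiableAt (isOpen_ball.mem_nhds h0)).hasDerivAt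
    rw [(((hh'.sub_const c).const_mul (L : ℂ)).fun_div
      ((hh'.const_mul (conj c)).const_sub _) (hD 0 h0)).deriv]
    change (L * deriv h 0 * D 0 - L * (c - c) * _) / D 0 ^ 2 = _
    field_simp [hD 0 h0]
    ring
  have hpos : 0 < L ^ 2 - ‖c‖ ^ 2 := by nlinarith [norm_nonneg c]
  have hschwarz := Complex.norm_deriv_le_div_of_mapsTo_ball hχ hmaps one_pos
  rw [hderiv, hD0, norm_div, norm_mul, Complex.norm_real, Complex.norm_real,
    Real.norm_of_nonneg hL.le, Real.norm_of_nonneg hpos.le, div_one, div_le_one hpos] at hschwarz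
  linarith

theorem norm_deriv_mul_le_sq_sub_norm_sq {h : ℂ → ℂ} {L : ℝ} (hL : 0 < L)
    (hh : DifferentiableOn ℂ h (ball 0 1)) (hbound : ∀ z ∈ ball (0 : ℂ) 1, ‖h z‖ ≤ L) :
    ‖deriv h 0‖ * L ≤ L ^ 2 - ‖h 0‖ ^ 2 := by
  have h0 : (0 : ℂ) ∈ ball (0 : ℂ) 1 := mem_ball_self one_pos
  rcases (hbound 0 h0).eq_or_lt with hc | hc
  · have heq : EqOn h (fun _ => h 0) (ball 0 1) :=
      Complex.eqOn_of_isPreconnected_of_isMaxOn_norm (convex_ball 0 1).isPreconnected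
        isOpen_ball hh h0 fun z hz => by simpa [hc] using hbound z hz
    rw [(heq.eventuallyEq_of_mem (isOpen_ball.mem_nhds h0)).deriv_eq, hc]
    simp
  · exact norm_deriv_mul_le_sq_sub_norm_sq_of_norm_lt hL hh hbound hc

theorem LipschitzOnWith.inv₀_of_le_norm {α 𝕜 : Type*} [PseudoMetricSpace α] [NormedField 𝕜]
    {f : α → 𝕜} {s : Set α} {K m : ℝ≥0} (hf : LipschitzOnWith K f s) (hm : 0 < m)
    (hfm : ∀ x ∈ s, (m : ℝ) ≤ ‖f x‖) : LipschitzOnWith (K / m ^ 2) (fun x => (f x)⁻¹) s := by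
  refine LipschitzOnWith.of_dist_le_mul fun x hx y hy => ?_
  have hmx := hfm x hx
  have hmy := hfm y hy
  have hm' : (0 : ℝ) < m := hm
  have hx0 : f x ≠ 0 := norm_pos_iff.mp (hm'.trans_le hmx)
  have hy0 : f y ≠ 0 := norm_pos_iff.mp (hm'.trans_le hmy)
  rw [dist_eq_norm, inv_sub_inv hx0 hy0, norm_div, norm_mul, ← dist_eq_norm, dist_comm,
    NNReal.coe_div, NNReal.coe_pow, div_mul_eq_mul_div,
    div_le_div_iff₀ (by positivity) (by positivity)]
  calc dist (f x) (f y) * m ^ 2 ≤ K * dist x y * m ^ 2 := by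
        gcongr; exact lipschitzOnWith_iff_dist_le_mul.mp hf x hx y hy
    _ ≤ K * dist x y * (‖f x‖ * ‖f y‖) := by
        rw [sq]; gcongr

/-- The fixed point of the contraction `z ↦ (-G z)⁻¹` is a zero of `1 + z * G z`. -/
theorem exists_one_add_mul_eq_zero_of_lipschitzOnWith {G : ℂ → ℂ} {K m : ℝ≥0} (hm : 0 < m)
    (hK : K < m ^ 2)
    (hG : LipschitzOnWith K G (closedBall 0 (m : ℝ)⁻¹))
    (hGm : ∀ z ∈ closedBall (0 : ℂ) (m : ℝ)⁻¹, (m : ℝ) ≤ ‖G z‖) :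
    ∃ z ∈ closedBall (0 : ℂ) (m : ℝ)⁻¹, 1 + z * G z = 0 := by
  have hm' : (0 : ℝ) < m := hm
  set T : ℂ → ℂ := fun z => (-G z)⁻¹
  have hT : LipschitzOnWith (K / m ^ 2) T (closedBall 0 (m : ℝ)⁻¹) :=
    hG.neg.inv₀_of_le_norm hm fun z hz => by simpa using hGm z hz
  have hmaps : MapsTo T (closedBall 0 (m : ℝ)⁻¹) (closedBall 0 (m : ℝ)⁻¹) := fun z hz => by
    rw [mem_closedBall_zero_iff, norm_inv, norm_neg]
    exact inv_anti₀ hm' (hGm z hz)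
  obtain ⟨z, hz, hfix, -⟩ := ContractingWith.exists_fixedPoint' isClosed_closedBall.isComplete
    hmaps ⟨(div_lt_one (pow_pos hm 2)).mpr hK, hT.mapsToRestrict hmaps⟩
    (mem_closedBall_self (by positivity)) (edist_ne_top _ _)
  have hGz : -G z ≠ 0 := by
    simpa using (hm'.trans_le (hGm z hz)).ne'
  refine ⟨z, hz, ?_⟩
  have : z * -G z = 1 := by
    calc z * -G z = T z * -G z := by rw [hfix.eq]
      _ = 1 := inv_mul_cancel₀ hGz
  linear_combination -this

/-- If `M = ‖G 0‖ > 1 + L`, then `‖G‖ ≥ M / (1 + L)` on the closed disk of radius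
`(1 + L) / M`, so `exists_one_add_mul_eq_zero_of_lipschitzOnWith` applies. -/
theorem norm_le_one_add_of_norm_deriv_le {G : ℂ → ℂ} {L : ℝ} (hL : L ≤ 1)
    (hG : DifferentiableOn ℂ G (ball 0 1)) (hG' : ∀ z ∈ ball (0 : ℂ) 1, ‖deriv G z‖ ≤ L)
    (hne : ∀ z ∈ ball (0 : ℂ) 1, 1 + z * G z ≠ 0) : ‖G 0‖ ≤ 1 + L := by
  have h0 : (0 : ℂ) ∈ ball (0 : ℂ) 1 := mem_ball_self one_pos
  have hL0 : 0 ≤ L := (norm_nonneg _).trans (hG' 0 h0)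
  by_contra! hM
  set M := ‖G 0‖
  set m : ℝ≥0 := (M / (1 + L)).toNNReal
  have hmM : (m : ℝ) * (1 + L) = M := by
    rw [Real.coe_toNNReal _ (by positivity), div_mul_cancel₀ _ (by positivity)]
  have hm1 : 1 < (m : ℝ) := by nlinarith
  have hsub : closedBall (0 : ℂ) (m : ℝ)⁻¹ ⊆ ball 0 1 :=
    closedBall_subset_ball (inv_lt_one_of_one_lt₀ hm1)
  have hLip : LipschitzOnWith L.toNNReal G (ball 0 1) :=
    (convex_ball 0 1).lipschitzOnWith_of_nnnorm_deriv_le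
      (fun z hz => hG.differentiableAt (isOpen_ball.mem_nhds hz)) fun z hz => by
        rw [← NNReal.coe_le_coe, coe_nnnorm, Real.coe_toNNReal _ hL0]
        exact hG' z hz
  have hlow : ∀ z ∈ closedBall (0 : ℂ) (m : ℝ)⁻¹, (m : ℝ) ≤ ‖G z‖ := by
    intro z hz
    have hGz := (lipschitzOnWith_iff_dist_le_mul.mp hLip) z (hsub hz) 0 h0
    rw [dist_eq_norm, dist_zero_right, Real.coe_toNNReal _ hL0] at hGz
    have hz' : ‖z‖ ≤ (m : ℝ)⁻¹ := mem_closedBall_zero_iff.mp hz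
    have hM' : M - ‖G z‖ ≤ ‖G z - G 0‖ := by
      simpa [M] using norm_sub_norm_le (G 0) (G z) |>.trans_eq (norm_sub_rev _ _)
    have hm : (m : ℝ) ≤ M - L * (m : ℝ)⁻¹ := by
      have hminv : (m : ℝ)⁻¹ ≤ 1 := inv_le_one_of_one_le₀ hm1.le
      nlinarith [mul_le_mul_of_nonneg_left hminv hL0]
    nlinarith [mul_le_mul_of_nonneg_left hz' hL0]
  obtain ⟨z, hz, hz0⟩ :=
    exists_one_add_mul_eq_zero_of_lipschitzOnWith (NNReal.coe_pos.mp (by linarith))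
    (by rw [← NNReal.coe_lt_coe, NNReal.coe_pow, Real.coe_toNNReal _ hL0]; nlinarith)
    (hLip.mono hsub) hlow
  exact hne z (hsub hz) hz0

theorem norm_two_mul_mul_sub_div_two_le {L : ℝ} (hL : 0 < L) {c₁ c₂ d : ℂ}
    (h₁ : ‖c₁‖ ≤ 1 + L) (h₂ : ‖c₂‖ ≤ L) (hd : ‖d‖ * L ≤ L ^ 2 - ‖c₂‖ ^ 2) :
    ‖2 * c₁ * c₂ - d / 2‖ ≤ 2 * L * (1 + L) := by
  have htri : ‖2 * c₁ * c₂ - d / 2‖ ≤ 2 * ‖c₁‖ * ‖c₂‖ + ‖d‖ / 2 := by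
    refine (norm_sub_le _ _).trans_eq ?_
    simp
  have hc₁ : ‖c₁‖ * ‖c₂‖ ≤ (1 + L) * ‖c₂‖ := mul_le_mul_of_nonneg_right h₁ (norm_nonneg _)
  nlinarith [mul_nonneg (sub_nonneg.mpr h₂) (show 0 ≤ 3 * L + 4 * L ^ 2 - ‖c₂‖ by nlinarith)]

theorem krushkal_n4_U_lambda (f fl : ℂ → ℂ) (lam : ℝ) (hlam0 : 0 < lam) (hlam1 : lam ≤ 1)
    (hf : AnalyticOnNhd ℂ f (ball 0 1)) (hf0 : f 0 = 0) (hf1 : deriv f 0 = 1)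
    (hU : ∀ z ∈ ball (0:ℂ) 1, z ≠ 0 → ‖(z / f z) ^ 2 * deriv f z - 1‖ < lam)
    (a : ℕ → ℂ) (ha : ∀ n, a n = iteratedDeriv n f 0 / n.factorial)
    (hfl : ∀ z, fl z = z / ((1 - z) * (1 - (lam:ℂ) * z)))
    (b : ℕ → ℂ) (hb : ∀ n, b n = iteratedDeriv n fl 0 / n.factorial) :
    ‖a 4 - (a 2) ^ 3‖ ≤ 2 * lam * (1 + lam) ∧ ‖b 4 - (b 2) ^ 3‖ = 2 * lam * (1 + lam) := by
  have h0 : (0 : ℂ) ∈ ball (0 : ℂ) 1 := mem_ball_self one_pos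
  have hf_ne : ∀ z ∈ ball (0 : ℂ) 1, z ≠ 0 → f z ≠ 0 := fun z hz hz0 hfz => by
    simpa [hfz] using (hU z hz hz0).trans_le hlam1
  obtain ⟨G, hG, hGne, rfl⟩ :=
    exists_eq_div_one_add_mul (ball_mem_nhds 0 one_pos) hf.differentiableOn hf0 hf1 hf_ne
  have hG' : ∀ z ∈ ball (0 : ℂ) 1, ‖deriv G z‖ ≤ lam :=
    norm_le_of_forall_norm_sq_mul_le (hG.deriv isOpen_ball) fun z hz => by
      rcases eq_or_ne z 0 with rfl | hz0
      · simpa using hlam0.le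
      rw [← norm_neg, ← sq_div_mul_deriv_div_one_add_mul_sub_one
        (hG.differentiableAt (isOpen_ball.mem_nhds hz)) hz0 (hGne z hz)]
      exact (hU z hz hz0).le
  refine ⟨?_, ?_⟩
  · rw [ha, ha]
    change ‖taylorCoeff _ 4 0 - taylorCoeff _ 2 0 ^ 3‖ ≤ _
    rw [taylorCoeff_four_sub_cube_div_one_add_id_mul
      (hG.analyticAt (isOpen_ball.mem_nhds h0)).contDiffAt]
    exact norm_two_mul_mul_sub_div_two_le hlam0
      (norm_le_one_add_of_norm_deriv_le hlam1 hG hG' hGne) (hG' 0 h0)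
      (norm_deriv_mul_le_sq_sub_norm_sq hlam0 (hG.deriv isOpen_ball) hG')
  · rw [hb, hb, funext hfl]
    change ‖taylorCoeff _ 4 0 - taylorCoeff _ 2 0 ^ 3‖ = _
    rw [taylorCoeff_four_sub_cube_div_one_sub_mul_one_sub, norm_mul, norm_mul, Complex.norm_real,
      norm_neg, Complex.norm_two, ← Complex.ofReal_one, ← Complex.ofReal_add, Complex.norm_real,
      Real.norm_of_nonneg hlam0.le, Real.norm_of_nonneg (by linarith)]
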